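/- arXiv:1712.05476 — 3 statements merged into one kernel-verified Lean document; each statement's English description precedes it below -/
import Mathlib

section
/- If ω is Diophantine with exponents (ν, τ) and η: S^1 → ℂ is an analytic (or C^∞ with rapidly decaying Fourier coefficients) function with zero average, then the function φ(θ) = Σ_{ℓ≠0} η̂_ℓ / (2(cos(2πℓω) − 1)) e^{2πiℓθ} is well-defined (the series converges absolutely), has zero average, and satisfies L_ω φ = η, where L_ω φ(θ) = φ(θ+ω) − 2φ(θ) + φ(θ−ω). -/
open Real Complex
open MeasureTheory

theorem sin_lb (ω ν τ : ℝ) (hν : 0 < ν) (hτ : 1 ≤ τ)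
    (hdioph : ∀ p q : ℤ, q ≠ 0 → ν * |(q : ℝ)| ^ (-τ) ≤ |ω * q - p|)
    (ℓ : ℤ) (hℓ : ℓ ≠ 0) :
    2 * (ν * |(ℓ : ℝ)| ^ (-τ)) ≤ |Real.sin (π * (ℓ * ω))| := by
  set x : ℝ := (ℓ : ℝ) * ω with hx
  set p : ℤ := round x with hp
  have hd1 : ν * |(ℓ : ℝ)| ^ (-τ) ≤ |x - p| := by
    have := hdioph p ℓ hℓ
    rwa [mul_comm ω (ℓ:ℝ)] at this
  have hd2 : |x - p| ≤ 1 / 2 := abs_sub_round x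
  have habs : |Real.sin (π * x)| = |Real.sin (π * (x - p))| := by
    have h1 : π * x = π * (x - p) + p * π := by ring
    rw [h1, Real.sin_add_int_mul_pi, abs_mul]
    rcases Int.even_or_odd p with he | ho
    · rw [he.neg_one_zpow]; simp
    · rw [Odd.neg_one_zpow ho]; simp
  have h1 : |Real.sin (π * (x - p))| = |Real.sin (π * |x - p|)| := by
    rcases abs_choice (x - p) with h | h
    · rw [h]
    · rw [h, show π * -(x-p) = -(π*(x-p)) by ring, Real.sin_neg, abs_neg]
  have h2 : |Real.sin (π * |x-p|)| = Real.sin (π * |x-p|) :=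
    abs_of_nonneg (Real.sin_nonneg_of_nonneg_of_le_pi (by positivity)
      (by nlinarith [Real.pi_pos]))
  have h3 : 2 / π * (π * |x - p|) ≤ Real.sin (π * |x - p|) :=
    Real.mul_le_sin (by positivity) (by nlinarith [Real.pi_pos])
  have h4 : 2 / π * (π * |x - p|) = 2 * |x - p| := by
    field_simp
  rw [habs, h1, h2]
  rw [h4] at h3
  nlinarith

theorem denom_lb (ω ν τ : ℝ) (hν : 0 < ν) (hτ : 1 ≤ τ)
    (hdioph : ∀ p q : ℤ, q ≠ 0 → ν * |(q : ℝ)| ^ (-τ) ≤ |ω * q - p|)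
    (ℓ : ℤ) (hℓ : ℓ ≠ 0) :
    16 * (ν * |(ℓ:ℝ)| ^ (-τ))^2 ≤ ‖(2 : ℂ) * ((Real.cos (2*π*ℓ*ω) : ℂ) - 1)‖ := by
  have hc : (2 : ℂ) * ((Real.cos (2*π*ℓ*ω) : ℂ) - 1)
      = ((2*(Real.cos (2*π*ℓ*ω) - 1) : ℝ) : ℂ) := by push_cast; ring
  rw [hc, Complex.norm_real, Real.norm_eq_abs]
  have hid : 2 * (Real.cos (2*π*ℓ*ω) - 1) = -(4 * Real.sin (π*(ℓ*ω))^2) := by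
    have h2 : (2:ℝ)*π*ℓ*ω = 2*(π*(ℓ*ω)) := by ring
    rw [h2, Real.cos_two_mul]
    nlinarith [Real.sin_sq_add_cos_sq (π*(ℓ*ω))]
  rw [hid, abs_neg, _root_.abs_of_nonneg (show (0:ℝ) ≤ 4 * Real.sin (π*(ℓ*ω))^2 by positivity)]
  have h := sin_lb ω ν τ hν hτ hdioph ℓ hℓ
  have ht : 0 < ν * |(ℓ:ℝ)| ^ (-τ) := by
    have : (0:ℝ) < |(ℓ:ℝ)| := by
      simpa using abs_pos.mpr (show ((ℓ:ℝ)) ≠ 0 by exact_mod_cast hℓ)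
    positivity
  nlinarith [_root_.sq_abs (Real.sin (π*(ℓ*ω)))]

theorem denom_ne (ω ν τ : ℝ) (hν : 0 < ν) (hτ : 1 ≤ τ)
    (hdioph : ∀ p q : ℤ, q ≠ 0 → ν * |(q : ℝ)| ^ (-τ) ≤ |ω * q - p|)
    (ℓ : ℤ) (hℓ : ℓ ≠ 0) :
    (2 : ℂ) * ((Real.cos (2*π*ℓ*ω) : ℂ) - 1) ≠ 0 := by
  have h := denom_lb ω ν τ hν hτ hdioph ℓ hℓ
  have ht : 0 < ν * |(ℓ:ℝ)| ^ (-τ) := by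
    have : (0:ℝ) < |(ℓ:ℝ)| := by
      simpa using abs_pos.mpr (show ((ℓ:ℝ)) ≠ 0 by exact_mod_cast hℓ)
    positivity
  intro h0
  rw [h0, norm_zero] at h
  nlinarith

theorem coeff_summable (ω ν τ C ρ : ℝ) (hν : 0 < ν) (hτ : 1 ≤ τ) (hC : 0 < C) (hρ : 0 < ρ)
    (hdioph : ∀ p q : ℤ, q ≠ 0 → ν * |(q : ℝ)| ^ (-τ) ≤ |ω * q - p|)
    (ηhat : ℤ → ℂ)
    (hdecay : ∀ ℓ : ℤ, ‖ηhat ℓ‖ ≤ C * Real.exp (-(2 * π * ρ * |(ℓ : ℝ)|))) :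
    Summable (fun ℓ : ℤ => ‖(if ℓ = 0 then (0:ℂ)
      else ηhat ℓ / (2 * ((Real.cos (2 * π * ℓ * ω) : ℂ) - 1)))‖) := by
  set k : ℕ := ⌈2 * τ⌉₊ with hk
  set r : ℝ := Real.exp (-(2 * π * ρ)) with hr
  have hr0 : 0 < r := Real.exp_pos _
  have hr1 : r < 1 := by
    rw [hr, Real.exp_lt_one_iff]
    nlinarith [Real.pi_pos]
  have hgsum : Summable (fun ℓ : ℤ => C / (16 * ν ^ 2) * (|(ℓ : ℝ)| ^ k * r ^ ℓ.natAbs)) := by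
    apply Summable.mul_left
    apply Summable.of_nat_of_neg
    · have := summable_pow_mul_geometric_of_norm_lt_one (R := ℝ) k
        (r := r) (by rw [Real.norm_eq_abs, abs_of_pos hr0]; exact hr1)
      apply this.congr
      intro n
      simp [_root_.abs_of_nonneg (Nat.cast_nonneg (α := ℝ) n)]
    · have := summable_pow_mul_geometric_of_norm_lt_one (R := ℝ) k
        (r := r) (by rw [Real.norm_eq_abs, abs_of_pos hr0]; exact hr1)
      apply this.congr
      intro n
      simp [_root_.abs_of_nonneg (Nat.cast_nonneg (α := ℝ) n)]
  apply Summable.of_nonneg_of_le (fun ℓ => norm_nonneg _) _ hgsum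
  intro ℓ
  by_cases hℓ : ℓ = 0
  · subst hℓ; simp; positivity
  · rw [if_neg hℓ, norm_div]
    set a : ℝ := |(ℓ : ℝ)| with ha
    have ha1 : 1 ≤ a := by
      rw [ha]
      exact_mod_cast Int.one_le_abs (by exact_mod_cast hℓ)
    have ha0 : 0 < a := lt_of_lt_of_le one_pos ha1
    set t : ℝ := a ^ (-τ) with hta
    have ht0 : 0 < t := Real.rpow_pos_of_pos ha0 _
    have hDlb : 16 * ν ^ 2 * t ^ 2 ≤ ‖(2:ℂ) * ((Real.cos (2*π*ℓ*ω) : ℂ) - 1)‖ := by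
      have := denom_lb ω ν τ hν hτ hdioph ℓ hℓ
      calc 16 * ν ^ 2 * t ^ 2 = 16 * (ν * t) ^ 2 := by ring
        _ ≤ _ := this
    set e : ℝ := Real.exp (-(2 * π * ρ * a)) with he
    have he0 : 0 < e := Real.exp_pos _
    have step1 : ‖ηhat ℓ‖ / ‖(2:ℂ) * ((Real.cos (2*π*ℓ*ω) : ℂ) - 1)‖
        ≤ C * e / (16 * ν ^ 2 * t ^ 2) :=
      div_le_div₀ (by positivity) (hdecay ℓ) (by positivity) hDlb
    refine step1.trans ?_
    have hre : e = r ^ ℓ.natAbs := by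
      rw [he, hr, ← Real.exp_nat_mul]
      congr 1
      have : a = (ℓ.natAbs : ℝ) := by
        rw [ha, Nat.cast_natAbs]
        simp
      rw [this]; ring
    have hinv : t⁻¹ ^ 2 ≤ a ^ k := by
      have h1 : t⁻¹ = a ^ τ := by
        rw [hta, ← Real.rpow_neg (le_of_lt ha0), neg_neg]
      have h2 : (a ^ τ) ^ 2 = a ^ (τ * 2) := by
        rw [← Real.rpow_natCast (a ^ τ) 2, ← Real.rpow_mul (le_of_lt ha0)]
        norm_num
      rw [h1, h2, ← Real.rpow_natCast a k]
      apply Real.rpow_le_rpow_of_exponent_le ha1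
      have := Nat.le_ceil (2 * τ)
      rw [← hk] at this
      linarith
    have key : C * e / (16 * ν ^ 2 * t ^ 2) = C / (16 * ν ^ 2) * (t⁻¹ ^ 2 * e) := by
      field_simp
    rw [key, hre]
    gcongr

/-- Solution of the cohomology equation `L_ω φ = η` for Diophantine `ω` and `η`
with exponentially decaying Fourier coefficients and zero average: the series
`φ(θ) = Σ_{ℓ≠0} η̂_ℓ/(2(cos(2πℓω) − 1)) e^{2πiℓθ}` converges absolutely, has
zero average, and satisfies `φ(θ+ω) − 2φ(θ) + φ(θ−ω) = η(θ)`. -/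
theorem solve_cohomology_equation
    (ω ν τ C ρ : ℝ) (hν : 0 < ν) (hτ : 1 ≤ τ) (hC : 0 < C) (hρ : 0 < ρ)
    (hdioph : ∀ p q : ℤ, q ≠ 0 → ν * |(q : ℝ)| ^ (-τ) ≤ |ω * q - p|)
    (ηhat : ℤ → ℂ)
    (hdecay : ∀ ℓ : ℤ, ‖ηhat ℓ‖ ≤ C * Real.exp (-(2 * π * ρ * |(ℓ : ℝ)|)))
    (havg : ηhat 0 = 0)
    (η φ : ℝ → ℂ)
    (hη : ∀ θ : ℝ, HasSum (fun ℓ : ℤ => ηhat ℓ * Complex.exp (2 * (π : ℂ) * Complex.I * ℓ * θ)) (η θ))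
    (hφ : ∀ θ : ℝ, φ θ =
      ∑' ℓ : ℤ, (if ℓ = 0 then 0
        else ηhat ℓ / (2 * ((Real.cos (2 * π * ℓ * ω) : ℂ) - 1)))
          * Complex.exp (2 * (π : ℂ) * Complex.I * ℓ * θ)) :
    (∀ θ : ℝ, Summable (fun ℓ : ℤ =>
        (if ℓ = 0 then 0
          else ηhat ℓ / (2 * ((Real.cos (2 * π * ℓ * ω) : ℂ) - 1)))
          * Complex.exp (2 * (π : ℂ) * Complex.I * ℓ * θ)))
    ∧ (∫ θ in (0 : ℝ)..1, φ θ) = 0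
    ∧ (∀ θ : ℝ, φ (θ + ω) - 2 * φ θ + φ (θ - ω) = η θ) := by
  have hcs := coeff_summable ω ν τ C ρ hν hτ hC hρ hdioph ηhat hdecay
  have hnormE : ∀ (ℓ : ℤ) (θ : ℝ), ‖Complex.exp (2 * (π : ℂ) * Complex.I * ℓ * θ)‖ = 1 := by
    intro ℓ θ
    have h : 2 * (π : ℂ) * Complex.I * ℓ * θ = ((2 * π * ℓ * θ : ℝ) : ℂ) * Complex.I := by
      push_cast; ring
    rw [h, Complex.norm_exp_ofReal_mul_I]
  have hsum : ∀ θ : ℝ, Summable (fun ℓ : ℤ =>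
      (if ℓ = 0 then 0
        else ηhat ℓ / (2 * ((Real.cos (2 * π * ℓ * ω) : ℂ) - 1)))
        * Complex.exp (2 * (π : ℂ) * Complex.I * ℓ * θ)) := by
    intro θ
    apply Summable.of_norm
    refine hcs.congr fun ℓ => ?_
    rw [norm_mul, hnormE, mul_one]
  refine ⟨hsum, ?_, ?_⟩
  · -- integral part
    have hF_int : ∀ ℓ : ℤ, IntegrableOn (fun θ : ℝ =>
        (if ℓ = 0 then 0
          else ηhat ℓ / (2 * ((Real.cos (2 * π * ℓ * ω) : ℂ) - 1)))
          * Complex.exp (2 * (π : ℂ) * Complex.I * ℓ * θ)) (Set.Ioc 0 1) := by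
      intro ℓ
      apply Continuous.integrableOn_Ioc
      exact continuous_const.mul (Complex.continuous_exp.comp
        (continuous_const.mul Complex.continuous_ofReal))
    have hF_sum : Summable (fun ℓ : ℤ => ∫ θ in Set.Ioc (0:ℝ) 1,
        ‖(if ℓ = 0 then 0
          else ηhat ℓ / (2 * ((Real.cos (2 * π * ℓ * ω) : ℂ) - 1)))
          * Complex.exp (2 * (π : ℂ) * Complex.I * ℓ * θ)‖) := by
      refine hcs.congr fun ℓ => ?_
      have hfun : (fun θ : ℝ => ‖(if ℓ = 0 then 0
          else ηhat ℓ / (2 * ((Real.cos (2 * π * ℓ * ω) : ℂ) - 1)))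
          * Complex.exp (2 * (π : ℂ) * Complex.I * ℓ * θ)‖)
          = fun _ : ℝ => ‖(if ℓ = 0 then (0:ℂ)
          else ηhat ℓ / (2 * ((Real.cos (2 * π * ℓ * ω) : ℂ) - 1)))‖ := by
        funext θ
        rw [norm_mul, hnormE, mul_one]
      rw [hfun, MeasureTheory.setIntegral_const]
      simp [Real.volume_Ioc]
    have hzero : ∀ ℓ : ℤ, (∫ θ in Set.Ioc (0:ℝ) 1,
        (if ℓ = 0 then 0
          else ηhat ℓ / (2 * ((Real.cos (2 * π * ℓ * ω) : ℂ) - 1)))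
          * Complex.exp (2 * (π : ℂ) * Complex.I * ℓ * θ)) = 0 := by
      intro ℓ
      by_cases h0 : ℓ = 0
      · simp [h0]
      · rw [if_neg h0, MeasureTheory.integral_const_mul]
        have hI : (∫ θ in Set.Ioc (0:ℝ) 1, Complex.exp (2 * (π : ℂ) * Complex.I * ℓ * θ)) = 0 := by
          rw [← intervalIntegral.integral_of_le zero_le_one]
          have hc0 : (2 * (π : ℂ) * Complex.I * ℓ) ≠ 0 := by
            apply mul_ne_zero
            apply mul_ne_zero
            apply mul_ne_zero
            · norm_num
            · exact Complex.ofReal_ne_zero.mpr Real.pi_ne_zero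
            · exact Complex.I_ne_zero
            · exact_mod_cast h0
          rw [integral_exp_mul_complex hc0]
          have h1 : 2 * (π : ℂ) * Complex.I * ℓ * (1:ℝ) = (ℓ : ℂ) * (2 * π * Complex.I) := by
            push_cast; ring
          rw [h1, Complex.exp_int_mul_two_pi_mul_I]
          simp
        rw [hI, mul_zero]
    rw [intervalIntegral.integral_of_le zero_le_one]
    calc (∫ θ in Set.Ioc (0:ℝ) 1, φ θ)
        = ∫ θ in Set.Ioc (0:ℝ) 1, ∑' ℓ : ℤ, (if ℓ = 0 then 0
            else ηhat ℓ / (2 * ((Real.cos (2 * π * ℓ * ω) : ℂ) - 1)))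
            * Complex.exp (2 * (π : ℂ) * Complex.I * ℓ * θ) := by
          simp only [hφ]
      _ = ∑' ℓ : ℤ, ∫ θ in Set.Ioc (0:ℝ) 1, (if ℓ = 0 then 0
            else ηhat ℓ / (2 * ((Real.cos (2 * π * ℓ * ω) : ℂ) - 1)))
            * Complex.exp (2 * (π : ℂ) * Complex.I * ℓ * θ) :=
          (MeasureTheory.integral_tsum_of_summable_integral_norm hF_int hF_sum).symm
      _ = ∑' ℓ : ℤ, (0 : ℂ) := tsum_congr hzero
      _ = 0 := tsum_zero
  · -- cohomology equation
    intro θ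
    have H1 : HasSum (fun ℓ : ℤ =>
        (if ℓ = 0 then 0 else ηhat ℓ / (2 * ((Real.cos (2 * π * ℓ * ω) : ℂ) - 1)))
          * Complex.exp (2 * (π : ℂ) * Complex.I * ℓ * ((θ + ω : ℝ) : ℂ))) (φ (θ + ω)) := by
      rw [hφ (θ + ω)]; exact (hsum (θ + ω)).hasSum
    have H2 : HasSum (fun ℓ : ℤ =>
        (if ℓ = 0 then 0 else ηhat ℓ / (2 * ((Real.cos (2 * π * ℓ * ω) : ℂ) - 1)))
          * Complex.exp (2 * (π : ℂ) * Complex.I * ℓ * (θ : ℂ))) (φ θ) := by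
      rw [hφ θ]; exact (hsum θ).hasSum
    have H3 : HasSum (fun ℓ : ℤ =>
        (if ℓ = 0 then 0 else ηhat ℓ / (2 * ((Real.cos (2 * π * ℓ * ω) : ℂ) - 1)))
          * Complex.exp (2 * (π : ℂ) * Complex.I * ℓ * ((θ - ω : ℝ) : ℂ))) (φ (θ - ω)) := by
      rw [hφ (θ - ω)]; exact (hsum (θ - ω)).hasSum
    have Hc := (H1.sub (H2.mul_left 2)).add H3
    have heq : ∀ ℓ : ℤ,
        ((if ℓ = 0 then 0 else ηhat ℓ / (2 * ((Real.cos (2 * π * ℓ * ω) : ℂ) - 1)))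
            * Complex.exp (2 * (π : ℂ) * Complex.I * ℓ * ((θ + ω : ℝ) : ℂ))
          - 2 * ((if ℓ = 0 then 0 else ηhat ℓ / (2 * ((Real.cos (2 * π * ℓ * ω) : ℂ) - 1)))
            * Complex.exp (2 * (π : ℂ) * Complex.I * ℓ * (θ : ℂ)))
          + (if ℓ = 0 then 0 else ηhat ℓ / (2 * ((Real.cos (2 * π * ℓ * ω) : ℂ) - 1)))
            * Complex.exp (2 * (π : ℂ) * Complex.I * ℓ * ((θ - ω : ℝ) : ℂ)))
        = ηhat ℓ * Complex.exp (2 * (π : ℂ) * Complex.I * ℓ * (θ : ℂ)) := by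
      intro ℓ
      by_cases h0 : ℓ = 0
      · simp [h0, havg]
      · rw [if_neg h0]
        set D : ℂ := 2 * ((Real.cos (2 * π * ℓ * ω) : ℂ) - 1) with hDdef
        have hD : D ≠ 0 := denom_ne ω ν τ hν hτ hdioph ℓ h0
        set A : ℂ := Complex.exp (2 * (π : ℂ) * Complex.I * ℓ * (θ : ℂ)) with hA
        set B : ℂ := Complex.exp (2 * (π : ℂ) * Complex.I * ℓ * (ω : ℂ)) with hB
        have hB0 : B ≠ 0 := Complex.exp_ne_zero _
        have hplus : Complex.exp (2 * (π : ℂ) * Complex.I * ℓ * ((θ + ω : ℝ) : ℂ)) = A * B := by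
          rw [hA, hB, ← Complex.exp_add]
          congr 1
          push_cast
          ring
        have hminus : Complex.exp (2 * (π : ℂ) * Complex.I * ℓ * ((θ - ω : ℝ) : ℂ)) = A / B := by
          rw [hA, hB, ← Complex.exp_sub]
          congr 1
          push_cast
          ring
        have hcos : B + B⁻¹ = 2 * ((Real.cos (2 * π * ℓ * ω) : ℝ) : ℂ) := by
          rw [hB, ← Complex.exp_neg]
          have h1 : 2 * (π : ℂ) * Complex.I * ℓ * (ω : ℂ) = ((2 * π * ℓ * ω : ℝ) : ℂ) * Complex.I := by
            push_cast; ring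
          have h2 : -(2 * (π : ℂ) * Complex.I * ℓ * (ω : ℂ)) = -((2 * π * ℓ * ω : ℝ) : ℂ) * Complex.I := by
            push_cast; ring
          rw [h1, ← neg_mul, ← Complex.two_cos, Complex.ofReal_cos]
        have hDeq : B + B⁻¹ - 2 = D := by
          rw [hcos, hDdef]; ring
        rw [hplus, hminus]
        calc ηhat ℓ / D * (A * B) - 2 * (ηhat ℓ / D * A) + ηhat ℓ / D * (A / B)
            = ηhat ℓ / D * A * (B + B⁻¹ - 2) := by
              field_simp
              ring
          _ = ηhat ℓ / D * A * D := by rw [hDeq]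
          _ = ηhat ℓ * A := by
              field_simp
    have Hc2 : HasSum (fun ℓ : ℤ =>
        ηhat ℓ * Complex.exp (2 * (π : ℂ) * Complex.I * ℓ * (θ : ℂ)))
        (φ (θ + ω) - 2 * φ θ + φ (θ - ω)) := (funext heq) ▸ Hc
    exact Hc2.unique (hη θ)
end

section
/- If a continuous function φ on the circle satisfies L_ω φ = 0 with ω irrational, then φ is constant. -/
/-!
The difference `ψ θ = φ (θ + ω) - φ θ` is continuous and has the periods `1` and `ω`; since
`ℤ + ℤω` is dense in `ℝ`, `ψ` is a constant `c`. Then `φ (θ + nω) = φ θ + n c`, and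
boundedness of the continuous periodic `φ` forces `c = 0`. So `φ` itself has the periods `1`
and `ω`, and is constant by the same density argument.
-/

open Function

namespace Function

variable {G α : Type*} [AddGroup G]

def periods (f : G → α) : AddSubgroup G where
  carrier := {c | Periodic f c}
  add_mem' {a b} ha hb x := by rw [← add_assoc, hb, ha]
  zero_mem' x := by rw [add_zero]
  neg_mem' {a} ha x := by rw [← ha (x + -a), neg_add_cancel_right]

theorem eq_of_dense_periods [TopologicalSpace G] [TopologicalSpace α] [T1Space α] {f : G → α}
    (hf : Continuous f) (hd : Dense (periods f : Set G)) (x y : G) : f x = f y := by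
  have hfiber : ∀ z, f z = f 0 := by
    have hdense : Dense {z | f z = f 0} := hd.mono fun c hc => by simpa using hc 0
    have hclosed : IsClosed {z | f z = f 0} := isClosed_singleton.preimage hf
    intro z
    exact Set.eq_univ_iff_forall.1 (hclosed.closure_eq.symm.trans hdense.closure_eq) z
  rw [hfiber x, hfiber y]

theorem Periodic.eq_of_irrational_div [TopologicalSpace α] [T1Space α] {f : ℝ → α} {a b : ℝ}
    (hf : Continuous f) (ha : Periodic f a) (hb : Periodic f b) (hab : Irrational (a / b))
    (x y : ℝ) : f x = f y := by
  refine eq_of_dense_periods hf ((dense_addSubgroupClosure_pair_iff.2 hab).mono ?_) x y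
  rw [SetLike.coe_subset_coe, AddSubgroup.closure_le]
  rintro c (rfl | rfl)
  exacts [ha, hb]

end Function

theorem eq_zero_of_isBounded_range_of_add_eq_add_const {M E : Type*} [AddMonoid M]
    [NormedAddCommGroup E] [NormedSpace ℝ E] {f : M → E} (hb : Bornology.IsBounded (Set.range f))
    {a : M} {c : E} (hfc : ∀ x, f (x + a) = f x + c) : c = 0 := by
  have hmul : ∀ n : ℕ, f (n • a) = f 0 + n • c := by
    intro n
    induction n with
    | zero => simp
    | succ n ih => rw [succ_nsmul, hfc, ih, succ_nsmul, add_assoc]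
  obtain ⟨C, hC⟩ := hb.exists_norm_le
  have hbound : ∀ n : ℕ, n * ‖c‖ ≤ C + C := fun n =>
    calc (n : ℝ) * ‖c‖ = ‖f (n • a) - f 0‖ := by
          rw [hmul, add_sub_cancel_left, RCLike.norm_nsmul ℝ, nsmul_eq_mul]
      _ ≤ ‖f (n • a)‖ + ‖f 0‖ := norm_sub_le _ _
      _ ≤ C + C := add_le_add (hC _ ⟨_, rfl⟩) (hC _ ⟨_, rfl⟩)
  by_contra hc
  have hpos : 0 < ‖c‖ := norm_pos_iff.2 hc
  obtain ⟨n, hn⟩ := exists_nat_gt ((C + C) / ‖c‖)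
  rw [div_lt_iff₀ hpos] at hn
  linarith [hbound n]

/-- If a continuous `1`-periodic function `φ` satisfies `L_ω φ = 0` with `ω`
irrational, then `φ` is constant. -/
theorem kernel_of_Lomega_is_constant
    (ω : ℝ) (hω : Irrational ω)
    (φ : ℝ → ℂ) (hc : Continuous φ) (hper : Function.Periodic φ 1)
    (h : ∀ θ : ℝ, φ (θ + ω) - 2 * φ θ + φ (θ - ω) = 0) :
    ∃ k : ℂ, ∀ θ : ℝ, φ θ = k := by
  have hirr : Irrational (1 / ω) := by simpa using hω.inv
  set ψ : ℝ → ℂ := fun θ => φ (θ + ω) - φ θ with hψ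
  have hψ1 : Periodic ψ 1 := fun θ => by
    simp only [hψ, add_right_comm θ 1 ω, hper (θ + ω), hper θ]
  have hψω : Periodic ψ ω := fun θ => by
    have := h (θ + ω)
    rw [add_sub_cancel_right] at this
    simp only [hψ]
    linear_combination this
  have hψc : Continuous ψ := (hc.comp (continuous_add_const ω)).sub hc
  have hshift : ∀ θ, φ (θ + ω) = φ θ + ψ 0 := fun θ => by
    rw [← hψ1.eq_of_irrational_div hψc hψω hirr θ 0, hψ]
    ring
  have hψ0 : ψ 0 = 0 := eq_zero_of_isBounded_range_of_add_eq_add_const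
    (hper.isBounded_of_continuous one_ne_zero hc) hshift
  have hφω : Periodic φ ω := fun θ => by rw [hshift, hψ0, add_zero]
  exact ⟨φ 0, fun θ => hper.eq_of_irrational_div hc hφω hirr θ 0⟩
end

section
/- The modified Newton equation for the conjugacy factorizes: if u is smooth with h'(θ) = 1 + u'(θ) nowhere zero, then for any smooth v, δ, the equation h'(θ)·(D_u E_c[u] v)(θ) − v(θ)·(D_u E_c[u] h')(θ) = −h'(θ)(E_c[u](θ) − δ) is equivalent to D_+^b[ −h'(θ)h'(θ−ω) D_−[ h'(θ)^{−1} v(θ) ] ] = −h'(θ)(E_c[u](θ) − δ), where D_− f(θ) = f(θ−ω) − f(θ) and D_+^b f(θ) = f(θ+ω) − b f(θ). -/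
/-- Factorization of the modified Newton equation: with
`E(θ) = u(θ+ω) − (1+b)u(θ) + b u(θ−ω) + (1−b)ω − c + εV'(θ+u(θ))`,
`(DE v)(θ) = v(θ+ω) − (1+b)v(θ) + b v(θ−ω) + εV''(θ+u(θ))v(θ)`, and
`h'(θ) = 1 + u'(θ)` nowhere zero, the equation
`h'·(DE v) − v·(DE h') = −h'(E − δ)` is equivalent to
`D₊ᵇ[−h'(θ)h'(θ−ω) D₋[v/h']](θ) = −h'(θ)(E(θ) − δ)`, where
`D₋f(θ) = f(θ−ω) − f(θ)` and `D₊ᵇf(θ) = f(θ+ω) − b f(θ)`. -/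
theorem newton_equation_factorization
    (b c ε ω δ : ℝ) (V' : ℝ → ℝ) (hV : ContDiff ℝ (⊤ : ℕ∞) V')
    (u : ℝ → ℝ) (hu : ContDiff ℝ (⊤ : ℕ∞) u)
    (h' : ℝ → ℝ) (hh' : ∀ θ : ℝ, h' θ = 1 + deriv u θ)
    (hne : ∀ θ : ℝ, h' θ ≠ 0)
    (E : ℝ → ℝ)
    (hE : ∀ θ : ℝ, E θ = u (θ + ω) - (1 + b) * u θ + b * u (θ - ω)
      + (1 - b) * ω - c + ε * V' (θ + u θ))
    (DE : (ℝ → ℝ) → ℝ → ℝ)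
    (hDE : ∀ (v : ℝ → ℝ) (θ : ℝ), DE v θ = v (θ + ω) - (1 + b) * v θ + b * v (θ - ω)
      + ε * deriv V' (θ + u θ) * v θ)
    (Dminus : (ℝ → ℝ) → ℝ → ℝ)
    (hDm : ∀ (f : ℝ → ℝ) (θ : ℝ), Dminus f θ = f (θ - ω) - f θ)
    (Dplus : (ℝ → ℝ) → ℝ → ℝ)
    (hDp : ∀ (f : ℝ → ℝ) (θ : ℝ), Dplus f θ = f (θ + ω) - b * f θ)
    (v : ℝ → ℝ) (hv : ContDiff ℝ (⊤ : ℕ∞) v) :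
    (∀ θ : ℝ, h' θ * DE v θ - v θ * DE h' θ = -(h' θ) * (E θ - δ))
    ↔
    (∀ θ : ℝ,
      Dplus (fun t => -(h' t) * h' (t - ω) * Dminus (fun s => v s / h' s) t) θ
        = -(h' θ) * (E θ - δ)) := by
  have key : ∀ θ : ℝ,
      Dplus (fun t => -(h' t) * h' (t - ω) * Dminus (fun s => v s / h' s) t) θ
        = h' θ * DE v θ - v θ * DE h' θ := by
    intro θ
    rw [hDp, hDE, hDE, hDm, hDm]
    have h1 := hne (θ + ω)
    have h2 := hne θ
    have h3 := hne (θ - ω)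
    have h4 := hne (θ + ω - ω)
    field_simp
    ring
  constructor <;> intro H θ <;> [rw [key]; rw [← key]] <;> exact H θ
end
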